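/- A continued fraction n_k - 1/(n_{k-1} - 1/(... - 1/n_1)) in which all entries n_1,...,n_k are nonzero even integers has absolute value strictly greater than 1. -/

import Mathlib

/-- Evaluation of the continued fraction `n_k - 1/(n_{k-1} - 1/(⋯ - 1/n_1))`,
where the list is `[n_k, n_{k-1}, …, n_1]` (outermost entry first). -/
def cfEval : List ℤ → ℚ
  | [] => 0
  | n :: l => (n : ℚ) - (cfEval l)⁻¹

/-! Every tail of the continued fraction has absolute value `> 1`, so its reciprocal has absolute
value `< 1`, and subtracting that from an even entry `|n| ≥ 2` keeps the absolute value `> 1`.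
The induction carries the bound on the reciprocal, which also holds for the empty tail
(`0⁻¹ = 0`). -/

theorem Int.two_le_abs_of_even_of_ne_zero {n : ℤ} (hn : Even n) (hn0 : n ≠ 0) : 2 ≤ |n| := by
  obtain ⟨k, rfl⟩ := hn
  rw [le_abs']
  omega

theorem one_lt_abs_sub_of_two_le_abs {K : Type*} [Ring K] [LinearOrder K] [IsOrderedRing K]
    {a b : K} (ha : 2 ≤ |a|) (hb : |b| < 1) : 1 < |a - b| := by
  calc (1 : K) = 2 - 1 := by norm_num
    _ < |a| - |b| := (sub_le_sub_right ha 1).trans_lt (sub_lt_sub_left hb _)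
    _ ≤ |a - b| := abs_sub_abs_le_abs_sub a b

theorem one_lt_abs_cfEval_cons {n : ℤ} {l : List ℤ} (hn : Even n ∧ n ≠ 0)
    (hl : |(cfEval l)⁻¹| < 1) : 1 < |cfEval (n :: l)| :=
  one_lt_abs_sub_of_two_le_abs (by exact_mod_cast Int.two_le_abs_of_even_of_ne_zero hn.1 hn.2) hl

theorem abs_inv_cfEval_lt_one : ∀ l : List ℤ, (∀ n ∈ l, Even n ∧ n ≠ 0) → |(cfEval l)⁻¹| < 1
  | [], _ => by simp [cfEval]
  | n :: l, h => by
    rw [abs_inv]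
    exact inv_lt_one_of_one_lt₀ <| one_lt_abs_cfEval_cons (h n List.mem_cons_self)
      (abs_inv_cfEval_lt_one l fun m hm => h m (List.mem_cons_of_mem _ hm))

theorem stmt2 (l : List ℤ) (hne : l ≠ [])
    (h : ∀ n ∈ l, Even n ∧ n ≠ 0) :
    1 < |cfEval l| := by
  obtain ⟨n, t, rfl⟩ := List.exists_cons_of_ne_nil hne
  exact one_lt_abs_cfEval_cons (h n List.mem_cons_self)
    (abs_inv_cfEval_lt_one t fun m hm => h m (List.mem_cons_of_mem _ hm))
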